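/- Let k ≥ 2 be an integer, ε > 0, and let H : ℂ → ℂ be holomorphic on the disk D(0,ε) with |H(0)| ≠ 1. For 0 < |z| < ε set F(z) = z^(−k) and G(z) = H(z)/z^k, let R : {0 < |z| < ε} → ℝ be a differentiable function whose total differential at every point z is the map w ↦ Re(F(z)·G'(z)·w), and define ψ₃(z) = ½(|G(z)|² − |F(z)|²) + Re(G(z)·F(z)) − 2·R(z). Then for every α ∈ ℝ and every β ∈ ℂ, with M₃(z) = ½(|β|²/|z|² + α²|z|² − 1/|z|²) − 2α·log|z| + α·Re(β·conj(z)/z), one has |ψ₃(z) − M₃(z)| → ∞ as z → 0 (z ≠ 0). In particular, a complete non-embedded end is not asymptotic to any type-P, type-R or type-NR end. -/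

import Mathlib

open Complex Filter Topology

/-- The third coordinate of an improper affine front with Weierstrass data `(F, G)`
and real potential `R` (with `dR = Re (F·G' dz)`):
`ψ₃ = ½(|G|² − |F|²) + Re(G·F) − 2R`. -/
noncomputable def psi3 (F G : ℂ → ℂ) (R : ℂ → ℝ) (z : ℂ) : ℝ :=
  (1 / 2 : ℝ) * (‖G z‖ ^ 2 - ‖F z‖ ^ 2)
    + (G z * F z).re - 2 * R z

/-- The ℝ-linear total differential `w ↦ Re (F(z)·G'(z)·w)` of the potential `R`. -/
noncomputable def periodDeriv (F G : ℂ → ℂ) (z : ℂ) : ℂ →L[ℝ] ℝ :=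
  Complex.reCLM.comp
    (((ContinuousLinearMap.mul ℂ ℂ) (F z * deriv G z)).restrictScalars ℝ)

/-- The third coordinate of the model ends: type-P (`α = 0`), type-R (`β = 0`),
and type-NR. -/
noncomputable def model3 (α : ℝ) (β : ℂ) (z : ℂ) : ℝ :=
  (1 / 2 : ℝ) * (‖β‖ ^ 2 / ‖z‖ ^ 2 + α ^ 2 * ‖z‖ ^ 2
      - 1 / ‖z‖ ^ 2)
    - 2 * α * Real.log (‖z‖)
    + α * (β * (starRingEnd ℂ) z / z).re

/-! ### Auxiliary definitions and lemmas -/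

noncomputable def reMulCLM (c : ℂ) : ℂ →L[ℝ] ℝ :=
  Complex.reCLM.comp (((ContinuousLinearMap.mul ℂ ℂ) c).restrictScalars ℝ)

lemma reMulCLM_apply (c w : ℂ) : reMulCLM c w = (c * w).re := rfl

lemma reMulCLM_sub (c d : ℂ) : reMulCLM c - reMulCLM d = reMulCLM (c - d) := by
  ext w
  simp [reMulCLM_apply, sub_mul, Complex.sub_re]

lemma reMulCLM_norm_le (c : ℂ) : ‖reMulCLM c‖ ≤ ‖c‖ := by
  apply ContinuousLinearMap.opNorm_le_bound _ (norm_nonneg c)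
  intro w
  simp only [reMulCLM_apply]
  calc ‖(c * w).re‖ ≤ ‖c * w‖ := Complex.abs_re_le_norm _
    _ = ‖c‖ * ‖w‖ := by simp [map_mul]

lemma hasFDerivAt_re_comp {f : ℂ → ℂ} {f' : ℂ} {z : ℂ} (hf : HasDerivAt f f' z) :
    HasFDerivAt (fun w => (f w).re) (reMulCLM f') z := by
  have h1 : HasFDerivAt f (((ContinuousLinearMap.mul ℂ ℂ) f').restrictScalars ℝ) z := by
    have := hf.hasFDerivAt.restrictScalars ℝ
    refine this.congr_fderiv (ContinuousLinearMap.ext fun w => ?_)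
    simp [mul_comm]
  exact Complex.reCLM.hasFDerivAt.comp z h1

lemma key_identity (k : ℕ) (hk : 1 ≤ k) (z a b : ℂ) (hz : z ≠ 0) :
    (z^k)⁻¹ * ((a * z^k - b * (k * z^(k-1)))/(z^k)^2)
      - (a * (2*z^(2*k)) - b * ((2:ℂ)*(2*k)*z^(2*k-1)))/(2*z^(2*k))^2
      = a/(2*z^(2*k)) := by
  obtain ⟨m, rfl⟩ : ∃ m, k = m + 1 := ⟨k - 1, (Nat.succ_pred_eq_of_pos hk).symm⟩
  have h1 : m + 1 - 1 = m := rfl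
  have h2 : 2 * (m + 1) - 1 = 2*m + 1 := rfl
  have h3 : 2 * (m + 1) = 2*m + 2 := by ring
  rw [h1, h2, h3]
  field_simp
  ring

lemma hasFDerivAt_A (k : ℕ) (hk : 2 ≤ k) {ε : ℝ} {H : ℂ → ℂ}
    (hH : DifferentiableOn ℂ H (Metric.ball (0:ℂ) ε)) {R : ℂ → ℝ}
    (hR : ∀ z : ℂ, 0 < ‖z‖ → ‖z‖ < ε →
      HasFDerivAt R
        (periodDeriv (fun w => (w ^ k)⁻¹) (fun w => H w / w ^ k) z) z)
    {z : ℂ} (hz0 : z ≠ 0) (hzε : ‖z‖ < ε) :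
    HasFDerivAt (fun w => R w - (H w / (2 * w^(2*k))).re)
      (reMulCLM (deriv H z / (2*z^(2*k)))) z := by
  have hzb : z ∈ Metric.ball (0:ℂ) ε := by
    simp [Metric.mem_ball, Complex.dist_eq]
    simpa using hzε
  have hHz : HasDerivAt H (deriv H z) z :=
    (hH.differentiableAt (Metric.isOpen_ball.mem_nhds hzb)).hasDerivAt
  have hG : HasDerivAt (fun w => H w / w^k)
      ((deriv H z * z^k - H z * (k*z^(k-1)))/(z^k)^2) z :=
    hHz.div (hasDerivAt_pow k z) (pow_ne_zero k hz0)
  have derivG : deriv (fun w => H w / w^k) z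
      = (deriv H z * z^k - H z * (k*z^(k-1)))/(z^k)^2 := hG.deriv
  have hden : HasDerivAt (fun w : ℂ => 2*w^(2*k)) ((2:ℂ)*(2*k)*z^(2*k-1)) z := by
    have := (hasDerivAt_pow (2*k) z).const_mul (2:ℂ)
    refine this.congr_deriv ?_
    push_cast
    ring
  have hu : HasDerivAt (fun w => H w / (2*w^(2*k)))
      ((deriv H z * (2*z^(2*k)) - H z * ((2:ℂ)*(2*k)*z^(2*k-1)))/(2*z^(2*k))^2) z :=
    hHz.div hden (mul_ne_zero two_ne_zero (pow_ne_zero _ hz0))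
  have hre := hasFDerivAt_re_comp hu
  have hRz := hR z (by simpa using hz0) hzε
  have hcomb := hRz.sub hre
  have hper : periodDeriv (fun w => (w ^ k)⁻¹) (fun w => H w / w ^ k) z
      = reMulCLM ((z^k)⁻¹ * deriv (fun w => H w / w^k) z) := rfl
  rw [hper] at hcomb
  rw [reMulCLM_sub] at hcomb
  show HasFDerivAt (R - fun w => (H w / (2 * w^(2*k))).re) _ z
  refine hcomb.congr_fderiv (congrArg reMulCLM ?_)
  rw [derivG]
  rw [← key_identity k (by omega) z (deriv H z) (H z) hz0]

lemma radial_bound (k : ℕ) (hk : 2 ≤ k) {ρ M' C_A : ℝ} (hρ : 0 < ρ)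
    (hM' : 0 ≤ M') {H : ℂ → ℂ} {A : ℂ → ℝ}
    (hA : ∀ w : ℂ, 0 < ‖w‖ → ‖w‖ ≤ ρ →
      HasFDerivAt A (reMulCLM (deriv H w / (2 * w^(2*k)))) w)
    (hHd : ∀ w : ℂ, ‖w‖ ≤ ρ → ‖deriv H w‖ ≤ M')
    (hCA : ∀ w : ℂ, ‖w‖ = ρ → |A w| ≤ C_A)
    {z : ℂ} (hz0 : 0 < ‖z‖) (hzρ : ‖z‖ ≤ ρ) :
    |A z| ≤ C_A + M' * ((‖z‖ ^ (2*k-1))⁻¹) := by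
  set r := ‖z‖ with hr
  set m := 2*k - 1 with hm
  have hm1 : 1 ≤ m := by omega
  have hm2k : m + 1 = 2*k := by omega
  set u : ℂ := (r : ℂ)⁻¹ * z with hu
  have hrne : (r : ℂ) ≠ 0 := by
    simp only [ne_eq, Complex.ofReal_eq_zero]
    exact ne_of_gt hz0
  have habs_u : ‖u‖ = 1 := by
    rw [hu, norm_mul, norm_inv, Complex.norm_real, Real.norm_eq_abs, _root_.abs_of_pos hz0]
    field_simp
    exact hr.symm
  have habs_smul : ∀ t : ℝ, 0 ≤ t → ‖t • u‖ = t := by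
    intro t ht
    rw [Complex.real_smul, norm_mul, Complex.norm_real, Real.norm_eq_abs, habs_u,
      _root_.abs_of_nonneg ht, mul_one]
  have hzu : (r : ℝ) • u = z := by
    rw [Complex.real_smul, hu]
    field_simp
  have hγ : ∀ t : ℝ, HasDerivAt (fun s : ℝ => s • u) u t := by
    intro t
    simpa using (hasDerivAt_id t).smul_const u
  set f : ℝ → ℝ := fun t => A (t • u) - A z with hf
  have hfderiv : ∀ t : ℝ, r ≤ t → t ≤ ρ →
      HasDerivAt f ((reMulCLM (deriv H (t • u) / (2 * (t • u)^(2*k)))) u) t := by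
    intro t ht1 ht2
    have ht0 : 0 < t := lt_of_lt_of_le hz0 ht1
    have h1 := (hA (t • u) (by rw [habs_smul t ht0.le]; exact ht0)
      (by rw [habs_smul t ht0.le]; exact ht2)).comp_hasDerivAt t (hγ t)
    exact h1.sub_const (A z)
  have hbound : ∀ t : ℝ, r ≤ t → t ≤ ρ →
      ‖(reMulCLM (deriv H (t • u) / (2 * (t • u)^(2*k)))) u‖ ≤ M' / (2 * t^(2*k)) := by
    intro t ht1 ht2
    have ht0 : 0 < t := lt_of_lt_of_le hz0 ht1
    calc ‖(reMulCLM (deriv H (t • u) / (2 * (t • u)^(2*k)))) u‖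
        ≤ ‖reMulCLM (deriv H (t • u) / (2 * (t • u)^(2*k)))‖ * ‖u‖ :=
          ContinuousLinearMap.le_opNorm _ _
      _ ≤ ‖deriv H (t • u) / (2 * (t • u)^(2*k))‖ * 1 :=
          mul_le_mul (reMulCLM_norm_le _) (le_of_eq habs_u) (norm_nonneg _)
            (norm_nonneg _)
      _ = ‖deriv H (t • u)‖ / (2 * t^(2*k)) := by
          rw [mul_one, norm_div, norm_mul, norm_pow, habs_smul t ht0.le]
          norm_num
      _ ≤ M' / (2 * t^(2*k)) :=
          (div_le_div_iff_of_pos_right (by positivity)).mpr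
            (hHd (t • u) (by rw [habs_smul t ht0.le]; exact ht2))
  set B : ℝ → ℝ := fun t => (M'/2) * (m:ℝ)⁻¹ * ((r^m)⁻¹ - (t^m)⁻¹) with hB
  have hBderiv : ∀ t : ℝ, r ≤ t → t ≤ ρ →
      HasDerivAt B (M' / (2 * t^(2*k))) t := by
    intro t ht1 ht2
    have ht0 : 0 < t := lt_of_lt_of_le hz0 ht1
    have h1 : HasDerivAt (fun s : ℝ => (s^m)⁻¹) (-(m * t^(m-1)) / (t^m)^2) t :=
      (hasDerivAt_pow m t).inv (pow_ne_zero _ (ne_of_gt ht0))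
    have h2 := ((h1.const_sub ((r^m)⁻¹)).const_mul ((M'/2) * (m:ℝ)⁻¹))
    refine h2.congr_deriv ?_
    have htm : t ^ (m-1) * t = t ^ m := by
      rw [← pow_succ, Nat.sub_add_cancel hm1]
    have ht2k : t ^ (2*k) = t^m * t := by rw [← hm2k, pow_succ]
    have hmne : ((m:ℝ)) ≠ 0 := by positivity
    field_simp
    rw [ht2k, ← htm]
    ring
  have key : ∀ x ∈ Set.Icc r ρ, ‖f x‖ ≤ B x := by
    intro x hx
    refine image_norm_le_of_norm_deriv_right_le_deriv_boundary'
      (f' := fun t => (reMulCLM (deriv H (t • u) / (2 * (t • u)^(2*k)))) u)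
      (B' := fun t => M' / (2 * t^(2*k))) ?_ ?_ ?_ ?_ ?_ ?_ hx
    · intro t ht
      exact ((hfderiv t ht.1 ht.2).continuousAt).continuousWithinAt
    · intro t ht
      exact (hfderiv t ht.1 ht.2.le).hasDerivWithinAt
    · show ‖A ((r:ℝ) • u) - A z‖ ≤ B r
      rw [hzu]
      simp [hB]
    · intro t ht
      exact ((hBderiv t ht.1 ht.2).continuousAt).continuousWithinAt
    · intro t ht
      exact (hBderiv t ht.1 ht.2.le).hasDerivWithinAt
    · intro t ht
      exact hbound t ht.1 ht.2.le
  have hkey := key ρ ⟨hzρ, le_refl ρ⟩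
  have hBρ : B ρ ≤ M' * (r^m)⁻¹ := by
    have h1 : (0:ℝ) ≤ (ρ^m)⁻¹ := by positivity
    have h3 : (M'/2) * (m:ℝ)⁻¹ ≤ M' := by
      have hm' : (1:ℝ) ≤ (m:ℝ) := by exact_mod_cast hm1
      have : (m:ℝ)⁻¹ ≤ 1 := inv_le_one_of_one_le₀ hm'
      nlinarith
    calc B ρ ≤ (M'/2) * (m:ℝ)⁻¹ * (r^m)⁻¹ := by
          apply mul_le_mul_of_nonneg_left (sub_le_self _ h1) (by positivity)
      _ ≤ M' * (r^m)⁻¹ := mul_le_mul_of_nonneg_right h3 (by positivity)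
  have hAρ : |A (ρ • u)| ≤ C_A := hCA _ (habs_smul ρ hρ.le)
  have h5 : |A (ρ • u) - A z| ≤ M' * (r^m)⁻¹ := by
    calc |A (ρ • u) - A z| = ‖f ρ‖ := by simp [hf]
      _ ≤ B ρ := hkey
      _ ≤ M' * (r^m)⁻¹ := hBρ
  have h6 := abs_sub_abs_le_abs_sub (A z) (A (ρ • u))
  rw [abs_sub_comm] at h6
  linarith

lemma psi3_eq (k : ℕ) (H : ℂ → ℂ) (R : ℂ → ℝ) (z : ℂ) (hz : z ≠ 0) :
    psi3 (fun w => (w ^ k)⁻¹) (fun w => H w / w ^ k) R z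
      = (1/2 : ℝ) * ((‖H z‖)^2 - 1) * ((‖z‖)^(2*k))⁻¹
        - 2 * (R z - (H z / (2*z^(2*k))).re) := by
  have hzk : (z:ℂ)^k ≠ 0 := pow_ne_zero _ hz
  have hz2k : (z:ℂ)^(2*k) ≠ 0 := pow_ne_zero _ hz
  have habs : ‖z‖ ≠ 0 := by simpa using hz
  unfold psi3
  have h1 : ‖H z / z ^ k‖ ^ 2
      = (‖H z‖)^2 * ((‖z‖)^(2*k))⁻¹ := by
    rw [norm_div, div_pow, norm_pow, ← pow_mul]
    rw [div_eq_mul_inv, mul_comm k 2]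
  have h2 : ‖(z ^ k)⁻¹‖ ^ 2 = ((‖z‖)^(2*k))⁻¹ := by
    rw [norm_inv, inv_pow, norm_pow, ← pow_mul, mul_comm k 2]
  have h3 : (H z / z ^ k) * (z ^ k)⁻¹ = H z / z^(2*k) := by
    rw [two_mul, pow_add]
    field_simp
  have h4 : (H z / z^(2*k)).re = 2 * (H z / (2*z^(2*k))).re := by
    have he : H z / z^(2*k) = (2:ℂ) * (H z / (2*z^(2*k))) := by
      field_simp
    rw [he]
    simp
  rw [h1, h2, h3, h4]
  ring

lemma model3_bound (α : ℝ) (β : ℂ) (z : ℂ) (h0 : 0 < ‖z‖)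
    (h1 : ‖z‖ ≤ 1) :
    |model3 α β z| ≤ ((1/2) * (‖β‖)^2 + (1/2) * α^2 + 1/2 + 2 * |α|
        + |α| * ‖β‖) * ((‖z‖)^2)⁻¹ := by
  set r := ‖z‖ with hr
  set B := ‖β‖ with hB
  have hBnn : 0 ≤ B := norm_nonneg β
  have h2 : (0:ℝ) < r^2 := by positivity
  have hr2 : r^2 ≤ 1 := by nlinarith
  have hrinv : (1:ℝ) ≤ (r^2)⁻¹ := by
    have := one_div_le_one_div_of_le h2 hr2
    simpa using this
  have hzne : z ≠ 0 := norm_pos_iff.mp h0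
  have hlog : |Real.log r| ≤ (r^2)⁻¹ := by
    have hneg : Real.log r ≤ 0 := Real.log_nonpos h0.le h1
    have hinv : Real.log r⁻¹ ≤ r⁻¹ - 1 :=
      Real.log_le_sub_one_of_pos (by positivity)
    rw [Real.log_inv] at hinv
    have hr1 : r⁻¹ ≤ (r^2)⁻¹ := by
      have : r^2 ≤ r := by nlinarith
      have := one_div_le_one_div_of_le h2 this
      simpa [one_div] using this
    rw [abs_of_nonpos hneg]
    linarith
  have hre : |(β * (starRingEnd ℂ) z / z).re| ≤ B := by
    have h5 : ‖β * (starRingEnd ℂ) z / z‖ = B := by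
      rw [norm_div, norm_mul, Complex.norm_conj]
      field_simp
      exact hB.symm
    calc |(β * (starRingEnd ℂ) z / z).re| ≤ ‖β * (starRingEnd ℂ) z / z‖ :=
          Complex.abs_re_le_norm _
      _ = B := h5
  have hT1 : |(1 / 2 : ℝ) * (B ^ 2 / r ^ 2 + α ^ 2 * r ^ 2 - 1 / r ^ 2)|
      ≤ (1/2) * B^2 * (r^2)⁻¹ + (1/2) * α^2 * (r^2)⁻¹ + (1/2) * (r^2)⁻¹ := by
    rw [abs_mul, _root_.abs_of_nonneg (by norm_num : (0:ℝ) ≤ 1/2)]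
    have hα : α^2 * r^2 ≤ α^2 * (r^2)⁻¹ := by nlinarith [sq_nonneg α]
    have hS : |B ^ 2 / r ^ 2 + α ^ 2 * r ^ 2 - 1 / r ^ 2|
        ≤ B^2 * (r^2)⁻¹ + α^2 * (r^2)⁻¹ + (r^2)⁻¹ := by
      rw [abs_le, div_eq_mul_inv, div_eq_mul_inv]
      constructor
      · nlinarith [sq_nonneg α, sq_nonneg B, mul_pos h2 h2]
      · nlinarith [sq_nonneg α, sq_nonneg B, mul_pos h2 h2]
    linarith
  have hT2 : |2 * α * Real.log r| ≤ 2 * |α| * (r^2)⁻¹ := by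
    rw [abs_mul, abs_mul]
    have : |(2:ℝ)| = 2 := by norm_num
    rw [this]
    apply mul_le_mul_of_nonneg_left hlog (by positivity)
  have hT3 : |α * (β * (starRingEnd ℂ) z / z).re| ≤ |α| * B := by
    rw [abs_mul]
    exact mul_le_mul_of_nonneg_left hre (abs_nonneg α)
  have htot : |model3 α β z| ≤ |(1 / 2 : ℝ) * (B ^ 2 / r ^ 2 + α ^ 2 * r ^ 2 - 1 / r ^ 2)|
      + |2 * α * Real.log r| + |α * (β * (starRingEnd ℂ) z / z).re| := by
    unfold model3
    calc |(1 / 2 : ℝ) * (B ^ 2 / r ^ 2 + α ^ 2 * r ^ 2 - 1 / r ^ 2)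
          - 2 * α * Real.log r + α * (β * (starRingEnd ℂ) z / z).re|
        ≤ |(1 / 2 : ℝ) * (B ^ 2 / r ^ 2 + α ^ 2 * r ^ 2 - 1 / r ^ 2)
          - 2 * α * Real.log r| + |α * (β * (starRingEnd ℂ) z / z).re| := abs_add_le _ _
      _ ≤ _ := by
          have := abs_sub ((1 / 2 : ℝ) * (B ^ 2 / r ^ 2 + α ^ 2 * r ^ 2 - 1 / r ^ 2))
            (2 * α * Real.log r)
          linarith
  have hαB : |α| * B ≤ |α| * B * (r^2)⁻¹ := by nlinarith [mul_nonneg (abs_nonneg α) hBnn]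
  calc |model3 α β z| ≤ _ := htot
    _ ≤ ((1/2) * B^2 * (r^2)⁻¹ + (1/2) * α^2 * (r^2)⁻¹ + (1/2) * (r^2)⁻¹)
        + 2 * |α| * (r^2)⁻¹ + |α| * B := by linarith
    _ ≤ ((1/2) * B^2 + (1/2) * α^2 + 1/2 + 2 * |α| + |α| * B) * (r^2)⁻¹ := by
        nlinarith [hαB]

set_option maxHeartbeats 1000000 in
theorem nonembedded_end_not_asymptotic
    (k : ℕ) (hk : 2 ≤ k) (ε : ℝ) (hε : 0 < ε) (H : ℂ → ℂ)
    (hH : DifferentiableOn ℂ H (Metric.ball (0 : ℂ) ε))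
    (hH0 : ‖H 0‖ ≠ 1)
    (R : ℂ → ℝ)
    (hR : ∀ z : ℂ, 0 < ‖z‖ → ‖z‖ < ε →
      HasFDerivAt R
        (periodDeriv (fun w => (w ^ k)⁻¹) (fun w => H w / w ^ k) z) z) :
    ∀ (α : ℝ) (β : ℂ),
      Tendsto (fun z : ℂ =>
          |psi3 (fun w => (w ^ k)⁻¹) (fun w => H w / w ^ k) R z - model3 α β z|)
        (𝓝[≠] (0 : ℂ)) atTop := by
  intro α β
  set ρ := ε/2 with hρ_def
  have hρpos : 0 < ρ := by positivity
  have hρε : ρ < ε := by simp [hρ_def]; linarith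
  -- derivative of H is bounded on the closed ball of radius ρ
  have han : AnalyticOnNhd ℂ H (Metric.ball (0:ℂ) ε) :=
    hH.analyticOnNhd Metric.isOpen_ball
  have hderivCont : ContinuousOn (deriv H) (Metric.ball (0:ℂ) ε) :=
    (han.deriv).continuousOn
  have hsub : Metric.closedBall (0:ℂ) ρ ⊆ Metric.ball (0:ℂ) ε :=
    Metric.closedBall_subset_ball hρε
  obtain ⟨M', hM'⟩ := (isCompact_closedBall (0:ℂ) ρ).exists_bound_of_continuousOn
    (hderivCont.mono hsub)
  have hM'0 : 0 ≤ M' :=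
    le_trans (norm_nonneg _) (hM' 0 (Metric.mem_closedBall_self hρpos.le))
  have hHd : ∀ w : ℂ, ‖w‖ ≤ ρ → ‖deriv H w‖ ≤ M' := by
    intro w hw
    have : w ∈ Metric.closedBall (0:ℂ) ρ := by
      simp [Metric.mem_closedBall, Complex.dist_eq]
      simpa using hw
    exact hM' w this
  -- the potential difference A
  set A : ℂ → ℝ := fun w => R w - (H w / (2 * w^(2*k))).re with hA_def
  have hA : ∀ w : ℂ, 0 < ‖w‖ → ‖w‖ ≤ ρ →
      HasFDerivAt A (reMulCLM (deriv H w / (2 * w^(2*k)))) w := by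
    intro w h1 h2
    exact hasFDerivAt_A k hk hH hR (norm_pos_iff.mp h1) (lt_of_le_of_lt h2 hρε)
  -- bound for A on the sphere of radius ρ
  have hconts : ContinuousOn A (Metric.sphere (0:ℂ) ρ) := by
    intro w hw
    have hw' : ‖w‖ = ρ := by
      simp [Metric.mem_sphere, Complex.dist_eq] at hw
      simpa using hw
    exact ((hA w (by rw [hw']; exact hρpos) (le_of_eq hw')).continuousAt).continuousWithinAt
  obtain ⟨C_A, hC_A'⟩ := (isCompact_sphere (0:ℂ) ρ).exists_bound_of_continuousOn hconts
  have hC_A : ∀ w : ℂ, ‖w‖ = ρ → |A w| ≤ C_A := by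
    intro w hw
    apply hC_A' w
    simp [Metric.mem_sphere, Complex.dist_eq]
    simpa using hw
  have hC_A0 : 0 ≤ C_A := by
    have : (ρ : ℂ) ∈ Metric.sphere (0:ℂ) ρ := by
      simp [Metric.mem_sphere, Complex.dist_eq, abs_of_pos hρpos]
    exact le_trans (norm_nonneg _) (hC_A' _ this)
  -- the constant c
  set c := |(‖H 0‖)^2 - 1| with hc_def
  have hc : 0 < c := by
    rw [hc_def, abs_pos, sub_ne_zero]
    intro h
    apply hH0
    have hnn := norm_nonneg (H 0)
    have h1 : (‖H 0‖ - 1) * (‖H 0‖ + 1) = 0 := by nlinarith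
    rcases mul_eq_zero.mp h1 with h2 | h2
    · linarith
    · linarith
  -- eventually |H z|² - 1 is bounded away from 0
  have hHcont : ContinuousAt H 0 :=
    (hH.differentiableAt (Metric.isOpen_ball.mem_nhds (by simp [hε]))).continuousAt
  have hgcont : ContinuousAt (fun z : ℂ => |(‖H z‖)^2 - 1|) 0 :=
    (((continuous_norm.continuousAt.comp hHcont).pow 2).sub continuousAt_const).abs
  have hev : ∀ᶠ z : ℂ in 𝓝 0, c/2 < |(‖H z‖)^2 - 1| := by
    have h1 : Set.Ioi (c/2) ∈ 𝓝 ((fun z : ℂ => |(‖H z‖)^2 - 1|) 0) := by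
      apply isOpen_Ioi.mem_nhds
      show c/2 < |(‖H 0‖)^2 - 1|
      rw [← hc_def]
      linarith
    exact hgcont h1
  obtain ⟨δ, hδpos, hδ⟩ := Metric.eventually_nhds_iff.mp hev
  -- model bound constant
  set C_M := (1/2) * (‖β‖)^2 + (1/2) * α^2 + 1/2 + 2 * |α|
      + |α| * ‖β‖ with hCM_def
  have hCM0 : 0 ≤ C_M := by
    have := norm_nonneg β
    have := abs_nonneg α
    positivity
  -- lower bound function
  set Φ : ℝ → ℝ := fun r =>
    (r^(2*k))⁻¹ * (c/4 - 2*C_A * r^(2*k) - 2*M' * r - C_M * r^(2*k-2)) with hΦ_def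
  -- Φ (|z|) tends to infinity
  have hΦtend : Tendsto Φ (𝓝[>] (0:ℝ)) atTop := by
    have h1 : Tendsto (fun r : ℝ => (r^(2*k))⁻¹) (𝓝[>] (0:ℝ)) atTop := by
      apply tendsto_inv_nhdsGT_zero.comp
      apply tendsto_nhdsWithin_of_tendsto_nhds_of_eventually_within
      · have : ContinuousAt (fun r : ℝ => r^(2*k)) 0 := (continuous_pow (2*k)).continuousAt
        have h0 : (0:ℝ)^(2*k) = 0 := by
          rw [zero_pow]
          omega
        have := this.tendsto
        rw [h0] at this
        exact this.mono_left nhdsWithin_le_nhds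
      · filter_upwards [self_mem_nhdsWithin] with r hr
        exact pow_pos (Set.mem_Ioi.mp hr) (2*k)
    have h2 : Tendsto (fun r : ℝ => c/4 - 2*C_A * r^(2*k) - 2*M' * r - C_M * r^(2*k-2))
        (𝓝[>] (0:ℝ)) (𝓝 (c/4)) := by
      have hcont : ContinuousAt (fun r : ℝ =>
          c/4 - 2*C_A * r^(2*k) - 2*M' * r - C_M * r^(2*k-2)) 0 := by
        fun_prop
      have := hcont.tendsto
      have hval : c/4 - 2*C_A * (0:ℝ)^(2*k) - 2*M' * 0 - C_M * (0:ℝ)^(2*k-2) = c/4 := by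
        rw [zero_pow (by omega : 2*k ≠ 0), zero_pow (by omega : 2*k-2 ≠ 0)]
        ring
      rw [hval] at this
      exact this.mono_left nhdsWithin_le_nhds
    have := h2.pos_mul_atTop (by linarith : (0:ℝ) < c/4) h1
    apply this.congr
    intro r
    rw [hΦ_def]
    ring
  have habs : Tendsto (fun z : ℂ => ‖z‖) (𝓝[≠] (0:ℂ)) (𝓝[>] (0:ℝ)) := by
    apply tendsto_nhdsWithin_of_tendsto_nhds_of_eventually_within
    · have := continuous_norm.continuousAt (x := (0:ℂ))
      have h0 : ‖(0:ℂ)‖ = 0 := by simp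
      rw [ContinuousAt, h0] at this
      exact this.mono_left nhdsWithin_le_nhds
    · filter_upwards [self_mem_nhdsWithin] with z hz
      exact norm_pos_iff.mpr hz
  -- final comparison
  apply tendsto_atTop_mono' _ _ (hΦtend.comp habs)
  -- eventually the target dominates Φ ∘ abs
  have hmem : {z : ℂ | ‖z‖ < min δ (min ρ 1)} ∈ 𝓝[≠] (0:ℂ) := by
    apply mem_nhdsWithin_of_mem_nhds
    have : Metric.ball (0:ℂ) (min δ (min ρ 1)) ∈ 𝓝 (0:ℂ) :=
      Metric.ball_mem_nhds 0 (by positivity)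
    apply Filter.mem_of_superset this
    intro z hz
    simp [Metric.mem_ball, Complex.dist_eq] at hz
    simpa using hz
  filter_upwards [hmem, self_mem_nhdsWithin] with z hzlt hzne
  have hzne' : z ≠ 0 := hzne
  set r := ‖z‖ with hr_def
  have hr0 : 0 < r := norm_pos_iff.mpr hzne'
  have hrδ : r < δ := lt_of_lt_of_le hzlt (min_le_left _ _)
  have hrρ : r ≤ ρ := le_of_lt (lt_of_lt_of_le hzlt (le_trans (min_le_right _ _) (min_le_left _ _)))
  have hr1 : r ≤ 1 := le_of_lt (lt_of_lt_of_le hzlt (le_trans (min_le_right _ _) (min_le_right _ _)))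
  -- the identity
  have hid := psi3_eq k H R z hzne'
  -- bound on the H-term
  have hH2 : c/2 ≤ |(‖H z‖)^2 - 1| := by
    have := hδ (y := z) (by rw [Complex.dist_eq]; simpa using hrδ)
    linarith
  -- bound on A
  have hAbd : |A z| ≤ C_A + M' * ((r^(2*k-1))⁻¹) :=
    radial_bound k hk hρpos hM'0 hA hHd hC_A hr0 hrρ
  -- bound on model
  have hMbd : |model3 α β z| ≤ C_M * ((r^2)⁻¹) := model3_bound α β z hr0 hr1
  -- power identities
  have hrne : r ≠ 0 := ne_of_gt hr0
  have e1 : (r^(2*k))⁻¹ * r = (r^(2*k-1))⁻¹ := by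
    have : r^(2*k) = r^(2*k-1) * r := by
      rw [← pow_succ]
      congr 1
      omega
    rw [this, mul_inv]
    field_simp
  have e2 : (r^(2*k))⁻¹ * r^(2*k-2) = (r^2)⁻¹ := by
    have : r^(2*k) = r^2 * r^(2*k-2) := by
      rw [← pow_add]
      congr 1
      omega
    rw [this, mul_inv]
    have h2 : (r:ℝ)^(2*k-2) ≠ 0 := pow_ne_zero _ hrne
    field_simp
  -- main term lower bound
  have hmain : (c/4) * (r^(2*k))⁻¹
      ≤ |(1/2 : ℝ) * ((‖H z‖)^2 - 1) * ((r:ℝ)^(2*k))⁻¹| := by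
    rw [abs_mul, abs_mul]
    rw [_root_.abs_of_nonneg (by norm_num : (0:ℝ) ≤ 1/2),
      _root_.abs_of_nonneg (by positivity : (0:ℝ) ≤ ((r:ℝ)^(2*k))⁻¹)]
    have hpos : (0:ℝ) < (r^(2*k))⁻¹ := by positivity
    nlinarith
  -- assemble
  show Φ (‖z‖) ≤ _
  rw [hid]
  have harr : |(1/2 : ℝ) * ((‖H z‖)^2 - 1) * ((r:ℝ)^(2*k))⁻¹ - 2 * A z
      - model3 α β z|
      ≥ |(1/2 : ℝ) * ((‖H z‖)^2 - 1) * ((r:ℝ)^(2*k))⁻¹| - 2 * |A z|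
        - |model3 α β z| := by
    have t1 := abs_sub_abs_le_abs_sub
      ((1/2 : ℝ) * ((‖H z‖)^2 - 1) * ((r:ℝ)^(2*k))⁻¹ - 2 * A z)
      (model3 α β z)
    have t2 := abs_sub_abs_le_abs_sub
      ((1/2 : ℝ) * ((‖H z‖)^2 - 1) * ((r:ℝ)^(2*k))⁻¹)
      (2 * A z)
    have t3 : |2 * A z| = 2 * |A z| := by
      rw [abs_mul]
      norm_num
    rw [t3] at t2
    have t4 : |(1/2 : ℝ) * ((‖H z‖)^2 - 1) * ((r:ℝ)^(2*k))⁻¹ - 2 * A z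
        - model3 α β z| ≥ |(1/2 : ℝ) * ((‖H z‖)^2 - 1) * ((r:ℝ)^(2*k))⁻¹
        - 2 * A z| - |model3 α β z| := by
      have := abs_sub_abs_le_abs_sub
        ((1/2 : ℝ) * ((‖H z‖)^2 - 1) * ((r:ℝ)^(2*k))⁻¹ - 2 * A z)
        (model3 α β z)
      linarith [_root_.abs_abs (model3 α β z)]
    linarith
  have hΦval : Φ r = (c/4) * (r^(2*k))⁻¹ - 2*C_A - 2*M' * (r^(2*k-1))⁻¹
      - C_M * (r^2)⁻¹ := by
    have hx : (r:ℝ)^(2*k) ≠ 0 := pow_ne_zero _ hrne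
    have hinv : (r:ℝ)^(2*k) * ((r:ℝ)^(2*k))⁻¹ = 1 := mul_inv_cancel₀ hx
    show (r^(2*k))⁻¹ * (c/4 - 2*C_A * r^(2*k) - 2*M' * r - C_M * r^(2*k-2)) = _
    rw [← e1, ← e2]
    nlinarith [hinv]
  calc Φ r ≤ (c/4) * (r^(2*k))⁻¹ - 2*C_A - 2*M' * (r^(2*k-1))⁻¹ - C_M * (r^2)⁻¹ := by
        rw [hΦval]
    _ ≤ |(1/2 : ℝ) * ((‖H z‖)^2 - 1) * ((r:ℝ)^(2*k))⁻¹| - 2 * |A z|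
        - |model3 α β z| := by
        have hA2 : 2 * |A z| ≤ 2*C_A + 2*M' * (r^(2*k-1))⁻¹ := by linarith
        linarith
    _ ≤ |(1/2 : ℝ) * ((‖H z‖)^2 - 1) * ((r:ℝ)^(2*k))⁻¹ - 2 * A z
        - model3 α β z| := by linarith [harr]
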